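/- Let n ≥ 1, let m₁,…,mₙ be real numbers, let σ₁,…,σₙ be positive reals, and let S be a set of unordered pairs {i,j} with i ≠ j, with given real numbers c_{ij} for {i,j} ∈ S (a partial specification of covariances). Then the following are equivalent: (i) there exists a Borel probability measure on ℝⁿ with finite second moments whose coordinate random variables Xᵢ satisfy E[Xᵢ] = mᵢ, Var(Xᵢ) = σᵢ², and Cov(Xᵢ,Xⱼ) = c_{ij} for all {i,j} ∈ S; (ii) there exists a real symmetric n×n matrix R with Rᵢᵢ = 1, with R_{ij} = c_{ij}/(σᵢσⱼ) for all {i,j} ∈ S, and with all eigenvalues nonnegative (i.e. the partially specified correlation matrix admits a positive semidefinite completion). -/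

import Mathlib

/-! The covariance matrix `K` of a square-integrable random vector is positive semidefinite,
since `vᵀ K v = Var[∑ i, vᵢ Xᵢ]`, and conjugating it by `diagonal σ⁻¹` yields a completion with
unit diagonal. Conversely, if `R` is a positive semidefinite completion, the Gaussian measure
with mean `m` and covariance matrix `diagonal σ * R * diagonal σ` has all the prescribed moments. -/

open MeasureTheory ProbabilityTheory Matrix

namespace ProbabilityTheory

section covarianceMatrix

variable {Ω ι : Type*} [MeasurableSpace Ω] {μ : Measure Ω} {X : ι → Ω → ℝ}

noncomputable def covarianceMatrix (X : ι → Ω → ℝ) (μ : Measure Ω) : Matrix ι ι ℝ :=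
  Matrix.of fun i j => cov[X i, X j; μ]

lemma covarianceMatrix_apply [IsProbabilityMeasure μ] (hX : ∀ i, MemLp (X i) 2 μ) (i j : ι) :
    covarianceMatrix X μ i j = (∫ ω, X i ω * X j ω ∂μ) - (∫ ω, X i ω ∂μ) * ∫ ω, X j ω ∂μ :=
  covariance_eq_sub (hX i) (hX j)

lemma covarianceMatrix_apply_self [IsProbabilityMeasure μ] (hX : ∀ i, MemLp (X i) 2 μ) (i : ι) :
    covarianceMatrix X μ i i = (∫ ω, X i ω ^ 2 ∂μ) - (∫ ω, X i ω ∂μ) ^ 2 := by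
  simp only [covarianceMatrix_apply hX, sq]

lemma posSemidef_covarianceMatrix [Fintype ι] [IsFiniteMeasure μ] (hX : ∀ i, MemLp (X i) 2 μ) :
    (covarianceMatrix X μ).PosSemidef := by
  refine posSemidef_iff_dotProduct_mulVec.mpr ⟨?_, fun v => ?_⟩
  · exact isHermitian_iff_isSymm.mpr <| IsSymm.ext fun i j => covariance_comm _ _
  · have hvX : ∀ i, MemLp (v i • X i) 2 μ := fun i => (hX i).const_smul (v i)
    have hquad : star v ⬝ᵥ covarianceMatrix X μ *ᵥ v = cov[∑ i, v i • X i, ∑ j, v j • X j; μ] := by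
      rw [covariance_sum_sum hvX hvX]
      simp only [covariance_smul_left, covariance_smul_right, dotProduct, mulVec, covarianceMatrix,
        of_apply, star_trivial, Finset.mul_sum]
      exact Finset.sum_congr rfl fun i _ => Finset.sum_congr rfl fun j _ => by ring
    rw [hquad, covariance_self (memLp_finsetSum' _ fun i _ => hvX i).aemeasurable]
    exact variance_nonneg _ _

end covarianceMatrix

section gaussianPi

variable {ι : Type*} [Fintype ι] [DecidableEq ι]

noncomputable def gaussianPi (m : ι → ℝ) (K : Matrix ι ι ℝ) : Measure (ι → ℝ) :=
  (multivariateGaussian (WithLp.toLp 2 m) K).map WithLp.ofLp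

variable {m : ι → ℝ} {K : Matrix ι ι ℝ}

instance isProbabilityMeasure_gaussianPi : IsProbabilityMeasure (gaussianPi m K) :=
  Measure.isProbabilityMeasure_map (WithLp.measurable_ofLp 2 _).aemeasurable

lemma memLp_eval_gaussianPi (i : ι) : MemLp (fun x => x i) 2 (gaussianPi m K) := by
  have hid := IsGaussian.memLp_two_id (μ := multivariateGaussian (WithLp.toLp 2 m) K)
  exact (memLp_map_measure_iff (measurable_pi_apply (X := fun _ : ι => ℝ) i).aestronglyMeasurable
    (WithLp.measurable_ofLp 2 _).aemeasurable).mpr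
    (hid.continuousLinearMap_comp (EuclideanSpace.proj i : EuclideanSpace ℝ ι →L[ℝ] ℝ))

lemma integral_eval_gaussianPi (i : ι) : ∫ x, x i ∂(gaussianPi m K) = m i := by
  rw [gaussianPi, integral_map (WithLp.measurable_ofLp 2 _).aemeasurable
    (measurable_pi_apply (X := fun _ : ι => ℝ) i).aestronglyMeasurable]
  simpa using (EuclideanSpace.proj i).integral_comp_comm
    (IsGaussian.integrable_id (μ := multivariateGaussian (WithLp.toLp 2 m) K))

lemma covarianceMatrix_gaussianPi (hK : K.PosSemidef) :
    covarianceMatrix (fun i x => x i) (gaussianPi m K) = K := by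
  ext i j
  rw [covarianceMatrix, of_apply, gaussianPi,
    covariance_map (measurable_pi_apply (X := fun _ : ι => ℝ) i).aestronglyMeasurable
    (measurable_pi_apply (X := fun _ : ι => ℝ) j).aestronglyMeasurable
    (WithLp.measurable_ofLp 2 _).aemeasurable]
  exact covariance_eval_multivariateGaussian hK i j

end gaussianPi

end ProbabilityTheory

theorem partial_covariances_iff_psd_completion
    (n : ℕ) (m : Fin n → ℝ) (σ : Fin n → ℝ) (hσ : ∀ i, 0 < σ i)
    (S : Set (Fin n × Fin n))
    (c : Fin n → Fin n → ℝ) :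
    ((∃ μ : Measure (Fin n → ℝ), IsProbabilityMeasure μ ∧
        (∀ i, MemLp (fun x => x i) 2 μ) ∧
        (∀ i, (∫ x, x i ∂μ) = m i) ∧
        (∀ i, (∫ x, (x i) ^ 2 ∂μ) - (∫ x, x i ∂μ) ^ 2 = σ i ^ 2) ∧
        (∀ p ∈ S, (∫ x, x p.1 * x p.2 ∂μ) - (∫ x, x p.1 ∂μ) * (∫ x, x p.2 ∂μ) =
          c p.1 p.2)) ↔
      (∃ R : Matrix (Fin n) (Fin n) ℝ, R.IsSymm ∧ (∀ i, R i i = 1) ∧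
        (∀ p ∈ S, R p.1 p.2 = c p.1 p.2 / (σ p.1 * σ p.2)) ∧ R.PosSemidef)) := by
  have hσ0 i := (hσ i).ne'
  constructor
  · rintro ⟨μ, _, hX, -, hvar, hcov⟩
    set K := covarianceMatrix (fun i x => x i) μ
    have hK := posSemidef_covarianceMatrix hX
    have hR : (diagonal σ⁻¹ * K * diagonal σ⁻¹).PosSemidef := by
      simpa using hK.mul_mul_conjTranspose_same (diagonal σ⁻¹)
    refine ⟨_, isHermitian_iff_isSymm.mp hR.isHermitian, fun i => ?_, fun p hp => ?_, hR⟩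
    · have hKi : K i i = σ i ^ 2 := (covarianceMatrix_apply_self hX i).trans (hvar i)
      simp [diagonal_mul, mul_diagonal, hKi, sq, hσ0 i]
    · have hKp : K p.1 p.2 = c p.1 p.2 := (covarianceMatrix_apply hX p.1 p.2).trans (hcov p hp)
      simp [diagonal_mul, mul_diagonal, hKp]
      field_simp
  · rintro ⟨R, -, hdiag, hRS, hR⟩
    set K := diagonal σ * R * diagonal σ
    have hK : K.PosSemidef := by simpa using hR.mul_mul_conjTranspose_same (diagonal σ)
    have hX : ∀ i, MemLp (fun x => x i) 2 (gaussianPi m K) := memLp_eval_gaussianPi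
    have hcovK := covarianceMatrix_gaussianPi (m := m) hK
    refine ⟨gaussianPi m K, inferInstance, hX, integral_eval_gaussianPi, fun i => ?_,
      fun p hp => ?_⟩
    · rw [← covarianceMatrix_apply_self hX i, hcovK]
      simp [K, diagonal_mul, mul_diagonal, hdiag]
      ring
    · rw [← covarianceMatrix_apply hX, hcovK]
      simp [K, diagonal_mul, mul_diagonal, hRS p hp]
      field_simp [hσ0]
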